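/- arXiv:1308.3916 — 2 statements merged into one kernel-verified Lean document; each statement's English description precedes it below -/
import Mathlib

section
/- Let ᾱ = 1/4 and V₁(ξ) = (1/4)ξ₁⁴ + (1/2)(ξ₂ - ᾱ)², V₀(ξ) = (1/2)(ξ₁² + ξ₂²). Then the sublevel set Γ₁ = {ξ ∈ ℝ² : V₁(ξ) ≤ 0.015} is contained in the sublevel set Γ₀ = {ξ ∈ ℝ² : V₀(ξ) ≤ 1/6}. -/
/-! The two AM–GM bounds `ξ₁² ≤ (5/2) ξ₁⁴ + 1/10` and `(ξ₂ - 1/4)/2 ≤ 4 (ξ₂ - 1/4)² + 1/64`,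
tangent near the maximiser of `V₀` on `{V₁ = 0.015}`, give the affine comparison
`V₀ ≤ 5 V₁ + 57/640`; on `Γ₁` its right-hand side is `0.1640625 < 1/6`. -/

theorem half_sq_add_sq_le_five_mul_add (x y : ℝ) :
    (1 / 2) * (x ^ 2 + y ^ 2) ≤ 5 * ((1 / 4) * x ^ 4 + (1 / 2) * (y - 1 / 4) ^ 2) + 57 / 640 := by
  nlinarith [sq_nonneg (x ^ 2 - 1 / 5), sq_nonneg (2 * (y - 1 / 4) - 1 / 8)]

/-- Level-set containment in the design procedure (Example, ᾱ = 1/4):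
{ξ : V₁(ξ) ≤ 0.015} ⊆ {ξ : V₀(ξ) ≤ 1/6}, where
V₁(ξ) = (1/4)ξ₁⁴ + (1/2)(ξ₂ - 1/4)² and V₀(ξ) = (1/2)(ξ₁² + ξ₂²). -/
theorem sublevel_containment :
    {ξ : ℝ × ℝ | (1 / 4) * ξ.1 ^ 4 + (1 / 2) * (ξ.2 - 1 / 4) ^ 2 ≤ 0.015} ⊆
      {ξ : ℝ × ℝ | (1 / 2) * (ξ.1 ^ 2 + ξ.2 ^ 2) ≤ 1 / 6} := by
  intro ξ hξ
  have hcomp := half_sq_add_sq_le_five_mul_add ξ.1 ξ.2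
  simp only [Set.mem_ofPred_eq] at hξ ⊢
  norm_num at hξ
  linarith
end

section
/- Suppose V : X → ℝ≥0 and G : D ⇉ X satisfy V(g) ≤ γ' V(x) for all g ∈ G(x), x ∈ D, with γ' ∈ (0,1), and ⟨∇V(x), f(x)⟩ ≤ -2V(x) for all x ∈ C. Then along any solution of the hybrid system (flowing in C with ẋ = f(x), jumping from D with x⁺ ∈ G(x)), V(x(t,j)) ≤ e^{-2t} (γ')^j V(x(0,0)) for all (t,j) in the hybrid time domain of the solution. -/
/-! Along a flow interval `[T j, T (j+1)]` the function `t ↦ V (x t j)` satisfies the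
differential inequality `u' ≤ -2 u`, so by Grönwall it decays at least like `e^{-2 (t - T j)}`;
at each jump it is multiplied by at most `γ'`. Chaining these bounds over the hybrid time domain
gives the factor `e^{-2 t} γ'^j`. -/

open Set Real

theorem hasDerivAt_comp_inner_gradient {F : Type*} [NormedAddCommGroup F] [InnerProductSpace ℝ F]
    [CompleteSpace F] {V : F → ℝ} {φ : ℝ → F} {v : F} {t : ℝ}
    (hV : DifferentiableAt ℝ V (φ t)) (hφ : HasDerivAt φ v t) :
    HasDerivAt (fun s => V (φ s)) (inner ℝ (gradient V (φ t)) v) t := by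
  rw [inner_gradient_left]
  exact hV.hasFDerivAt.comp_hasDerivAt t hφ

theorem le_exp_mul_sub_of_deriv_right_le_neg_mul {u u' : ℝ → ℝ} {c a b : ℝ}
    (hu : ContinuousOn u (Icc a b)) (hu' : ∀ t ∈ Ico a b, HasDerivWithinAt u (u' t) (Ici t) t)
    (hdecay : ∀ t ∈ Ico a b, u' t ≤ -c * u t) :
    ∀ t ∈ Icc a b, u t ≤ exp (-c * (t - a)) * u a := by
  intro t ht
  have h := le_gronwallBound_of_liminf_deriv_right_le (K := -c) (ε := 0) hu
    (fun s hs _ hr => (hu' s hs).liminf_right_slope_le hr) le_rfl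
    (fun s hs => (add_zero (-c * u s)).symm ▸ hdecay s hs) t ht
  rwa [gronwallBound_ε0, mul_comm] at h

theorem hybrid_le_exp_mul_pow {W : ℝ → ℕ → ℝ} {T : ℕ → ℝ} {c γ : ℝ} (hγ : 0 ≤ γ)
    (hT : Monotone T)
    (hflow : ∀ j, ∀ t ∈ Icc (T j) (T (j + 1)), W t j ≤ exp (-c * (t - T j)) * W (T j) j)
    (hjump : ∀ j, W (T (j + 1)) (j + 1) ≤ γ * W (T (j + 1)) j) (j : ℕ) :
    ∀ t ∈ Icc (T j) (T (j + 1)), W t j ≤ exp (-c * (t - T 0)) * γ ^ j * W (T 0) 0 := by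
  have along : ∀ j, W (T j) j ≤ exp (-c * (T j - T 0)) * γ ^ j * W (T 0) 0 →
      ∀ t ∈ Icc (T j) (T (j + 1)), W t j ≤ exp (-c * (t - T 0)) * γ ^ j * W (T 0) 0 := by
    intro j hstart t ht
    calc W t j ≤ exp (-c * (t - T j)) * W (T j) j := hflow j t ht
      _ ≤ exp (-c * (t - T j)) * (exp (-c * (T j - T 0)) * γ ^ j * W (T 0) 0) := by gcongr
      _ = exp (-c * (t - T 0)) * γ ^ j * W (T 0) 0 := by
        rw [← mul_assoc, ← mul_assoc, ← exp_add]
        ring_nf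
  have start : ∀ j, W (T j) j ≤ exp (-c * (T j - T 0)) * γ ^ j * W (T 0) 0 := by
    intro j
    induction j with
    | zero => simp
    | succ j ih =>
      calc W (T (j + 1)) (j + 1) ≤ γ * W (T (j + 1)) j := hjump j
        _ ≤ γ * (exp (-c * (T (j + 1) - T 0)) * γ ^ j * W (T 0) 0) := by
          gcongr
          exact along j ih _ (right_mem_Icc.mpr (hT j.le_succ))
        _ = exp (-c * (T (j + 1) - T 0)) * γ ^ (j + 1) * W (T 0) 0 := by ring
  exact along j (start j)

theorem hybrid_exponential_decay_general (n : ℕ)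
    (V : EuclideanSpace ℝ (Fin n) → ℝ) (f : EuclideanSpace ℝ (Fin n) → EuclideanSpace ℝ (Fin n))
    (C D : Set (EuclideanSpace ℝ (Fin n)))
    (G : EuclideanSpace ℝ (Fin n) → Set (EuclideanSpace ℝ (Fin n)))
    (γ' : ℝ) (hγ'0 : 0 < γ')
    (hVdiff : Differentiable ℝ V)
    (hflowdecr : ∀ x ∈ C, inner ℝ (gradient V x) (f x) ≤ (-2 : ℝ) * V x)
    (hjumpdecr : ∀ x ∈ D, ∀ g ∈ G x, V g ≤ γ' * V x)
    -- a solution of the hybrid system, parameterized by jump times T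
    (T : ℕ → ℝ) (hT0 : T 0 = 0) (hTmono : Monotone T)
    (x : ℝ → ℕ → EuclideanSpace ℝ (Fin n))
    (hflow : ∀ j : ℕ, ∀ t ∈ Icc (T j) (T (j + 1)),
      x t j ∈ C ∧ HasDerivAt (fun s => x s j) (f (x t j)) t)
    (hjump : ∀ j : ℕ, x (T (j + 1)) j ∈ D ∧ x (T (j + 1)) (j + 1) ∈ G (x (T (j + 1)) j)) :
    ∀ j : ℕ, ∀ t ∈ Icc (T j) (T (j + 1)),
      V (x t j) ≤ Real.exp (-2 * t) * γ' ^ j * V (x 0 0) := by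
  have hderiv : ∀ j, ∀ t ∈ Icc (T j) (T (j + 1)), HasDerivAt (fun s => V (x s j))
      (inner ℝ (gradient V (x t j)) (f (x t j))) t :=
    fun j t ht => hasDerivAt_comp_inner_gradient (hVdiff _) (hflow j t ht).2
  have hdecay : ∀ j, ∀ t ∈ Icc (T j) (T (j + 1)),
      V (x t j) ≤ exp (-2 * (t - T j)) * V (x (T j) j) := fun j =>
    le_exp_mul_sub_of_deriv_right_le_neg_mul
      (fun t ht => (hderiv j t ht).continuousAt.continuousWithinAt)
      (fun t ht => (hderiv j t (Ico_subset_Icc_self ht)).hasDerivWithinAt)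
      (fun t ht => hflowdecr _ (hflow j t (Ico_subset_Icc_self ht)).1)
  intro j t ht
  simpa only [hT0, sub_zero] using hybrid_le_exp_mul_pow hγ'0.le hTmono hdecay
    (fun j => hjumpdecr _ (hjump j).1 _ (hjump j).2) j t ht

/-- Exponential decay of a Lyapunov function along hybrid solutions: if V decreases at
rate -2V along the flow ẋ = f(x) in C (via ⟨∇V(x), f(x)⟩ ≤ -2V(x)) and contracts by a
factor γ' ∈ (0,1) at jumps x⁺ ∈ G(x) from D, then along any solution
(parameterized by jump times 0 = T₀ ≤ T₁ ≤ ⋯, flowing on [T_j, T_{j+1}] in phase j),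
V(x(t,j)) ≤ e^{-2t} (γ')^j V(x(0,0)). -/
theorem hybrid_exponential_decay (n : ℕ)
    (V : EuclideanSpace ℝ (Fin n) → ℝ) (f : EuclideanSpace ℝ (Fin n) → EuclideanSpace ℝ (Fin n))
    (C D : Set (EuclideanSpace ℝ (Fin n)))
    (G : EuclideanSpace ℝ (Fin n) → Set (EuclideanSpace ℝ (Fin n)))
    (γ' : ℝ) (hγ'0 : 0 < γ') (hγ'1 : γ' < 1)
    (hVnonneg : ∀ x, 0 ≤ V x)
    (hVdiff : Differentiable ℝ V)
    (hflowdecr : ∀ x ∈ C, inner ℝ (gradient V x) (f x) ≤ (-2 : ℝ) * V x)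
    (hjumpdecr : ∀ x ∈ D, ∀ g ∈ G x, V g ≤ γ' * V x)
    -- a solution of the hybrid system, parameterized by jump times T
    (T : ℕ → ℝ) (hT0 : T 0 = 0) (hTmono : Monotone T)
    (x : ℝ → ℕ → EuclideanSpace ℝ (Fin n))
    (hflow : ∀ j : ℕ, ∀ t ∈ Icc (T j) (T (j + 1)),
      x t j ∈ C ∧ HasDerivAt (fun s => x s j) (f (x t j)) t)
    (hjump : ∀ j : ℕ, x (T (j + 1)) j ∈ D ∧ x (T (j + 1)) (j + 1) ∈ G (x (T (j + 1)) j)) :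
    ∀ j : ℕ, ∀ t ∈ Icc (T j) (T (j + 1)),
      V (x t j) ≤ Real.exp (-2 * t) * γ' ^ j * V (x 0 0) :=
  hybrid_exponential_decay_general n V f C D G γ' hγ'0 hVdiff hflowdecr hjumpdecr T hT0 hTmono x
    hflow hjump
end
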